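/- Assume irreflexivity of <_0 on worms. Worms satisfy the disjunction property: for worms A, A₁, …, A_I, GLP_Λ proves A → (A₁ ∨ ⋯ ∨ A_I) if and only if GLP_Λ proves A → A_i for some i ≤ I. -/

import Mathlib

inductive Formula (L : Type) : Type where
  | bot : Formula L
  | var : Nat → Formula L
  | imp : Formula L → Formula L → Formula L
  | box : L → Formula L → Formula L

namespace Formula

variable {L : Type}

def neg (φ : Formula L) : Formula L := imp φ bot
def top : Formula L := neg bot
def and (φ ψ : Formula L) : Formula L := neg (imp φ ψ.neg)
def or (φ ψ : Formula L) : Formula L := imp φ.neg ψ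
def iff (φ ψ : Formula L) : Formula L := (imp φ ψ).and (imp ψ φ)
def dia (α : L) (φ : Formula L) : Formula L := neg (box α φ.neg)

end Formula

open Formula

/-- Provability in the polymodal provability logic `GLP_Λ` over a linear order. -/
inductive GLP {L : Type} [LinearOrder L] : Formula L → Prop where
  | k1 : ∀ φ ψ : Formula L, GLP (φ.imp (ψ.imp φ))
  | k2 : ∀ φ ψ χ : Formula L, GLP ((φ.imp (ψ.imp χ)).imp ((φ.imp ψ).imp (φ.imp χ)))
  | k3 : ∀ φ ψ : Formula L, GLP ((φ.neg.imp ψ.neg).imp (ψ.imp φ))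
  | dist : ∀ (α : L) (φ ψ : Formula L), GLP ((Formula.box α (φ.imp ψ)).imp ((Formula.box α φ).imp (Formula.box α ψ)))
  | lob : ∀ (α : L) (φ : Formula L), GLP ((Formula.box α ((Formula.box α φ).imp φ)).imp (Formula.box α φ))
  | trans : ∀ (α β : L) (φ : Formula L), α ≤ β → GLP ((Formula.box α φ).imp (Formula.box β (Formula.box α φ)))
  | negintro : ∀ (α β : L) (φ : Formula L), α < β → GLP ((dia α φ).imp (Formula.box β (dia α φ)))
  | mono : ∀ (α β : L) (φ : Formula L), α ≤ β → GLP ((Formula.box α φ).imp (Formula.box β φ))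
  | mp : ∀ φ ψ : Formula L, GLP (φ.imp ψ) → GLP φ → GLP ψ
  | nec : ∀ (α : L) (φ : Formula L), GLP φ → GLP (Formula.box α φ)

/-- The worm (iterated consistency statement) associated to a list of modalities. -/
def worm {L : Type} : List L → Formula L
  | [] => Formula.top
  | α :: w => Formula.dia α (worm w)

/-- `Lt α A B` iff `GLP ⊢ B → ⟨α⟩A`. -/
def Lt {L : Type} [LinearOrder L] (α : L) (A B : List L) : Prop :=
  GLP ((worm B).imp (Formula.dia α (worm A)))

def Le {L : Type} [LinearOrder L] (α : L) (A B : List L) : Prop :=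
  Lt α A B ∨ A = B

def disjWorms {L : Type} (l : List (List L)) : Formula L :=
  (l.map worm).foldr Formula.or Formula.bot

/-!
Up to provable equivalence, worms are linearly ordered: two worms are either equivalent or one
of them implies `⟨ν⟩` of the other, for some letter `ν` occurring in them. Moreover the
conjunction of two worms is equivalent to a worm. Both facts are proved by induction on the
total length, splitting each worm at the least letter `μ` as `A ≡ P ∧ ⟨μ⟩R` with all letters
of `P` above `μ`, and recombining with `⟨ν⟩φ ∧ ⟨μ⟩ψ → ⟨ν⟩(φ ∧ ⟨μ⟩ψ)` for `μ < ν`, a consequence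
of the axiom `⟨μ⟩ψ → [ν]⟨μ⟩ψ`.

Comparing `A` with a worm equivalent to `A ∧ B`, and using that `A <_0 A` fails, gives
`⊢ A → B` or `⊢ A ∧ B → ⟨0⟩A`. So if `⊢ A → ⋁ᵢ Aᵢ` but `⊬ A → Aᵢ` for every `i`, then
`⊢ A → ⟨0⟩A`, contradicting irreflexivity.
-/

namespace GLP

variable {L : Type} [LinearOrder L] {φ ψ χ θ : Formula L}

theorem mp' (h : GLP (φ.imp ψ)) (hφ : GLP φ) : GLP ψ := GLP.mp _ _ h hφ

theorem weaken (h : GLP ψ) : GLP (φ.imp ψ) := (k1 ψ φ).mp' h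

theorem imp_app (h : GLP (φ.imp (ψ.imp χ))) (h' : GLP (φ.imp ψ)) : GLP (φ.imp χ) :=
  ((k2 φ ψ χ).mp' h).mp' h'

theorem imp_self (φ : Formula L) : GLP (φ.imp φ) := imp_app (k1 φ (φ.imp φ)) (k1 φ φ)

theorem imp_trans (h₁ : GLP (φ.imp ψ)) (h₂ : GLP (ψ.imp χ)) : GLP (φ.imp χ) :=
  imp_app (weaken h₂) h₁

theorem imp_contract (h : GLP (φ.imp (φ.imp ψ))) : GLP (φ.imp ψ) := imp_app h (imp_self φ)

theorem imp_swap (h : GLP (φ.imp (ψ.imp χ))) : GLP (ψ.imp (φ.imp χ)) :=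
  imp_trans (k1 ψ φ) ((k2 φ ψ χ).mp' h)

theorem imp_comp : GLP ((ψ.imp χ).imp ((φ.imp ψ).imp (φ.imp χ))) :=
  imp_trans (k1 (ψ.imp χ) φ) (k2 φ ψ χ)

theorem imp_imp_of_imp (h : GLP (ψ.imp χ)) : GLP ((φ.imp ψ).imp (φ.imp χ)) := imp_comp.mp' h

theorem imp_contra : GLP ((φ.imp ψ).imp (ψ.neg.imp φ.neg)) := imp_swap imp_comp

theorem contra (h : GLP (φ.imp ψ)) : GLP (ψ.neg.imp φ.neg) := imp_contra.mp' h

theorem bot_imp (φ : Formula L) : GLP (Formula.bot.imp φ) :=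
  (k3 φ .bot).mp' (weaken (imp_self .bot))

theorem imp_not_not (φ : Formula L) : GLP (φ.imp φ.neg.neg) := imp_swap (imp_self φ.neg)

theorem not_not_imp (φ : Formula L) : GLP (φ.neg.neg.imp φ) :=
  (k3 φ φ.neg.neg).mp' (imp_not_not φ.neg)

theorem imp_not_of_imp_not (h : GLP (φ.imp ψ.neg)) : GLP (ψ.imp φ.neg) :=
  imp_trans (imp_not_not ψ) (contra h)

theorem not_imp_of_not_imp (h : GLP (φ.neg.imp ψ)) : GLP (ψ.neg.imp φ) :=
  imp_trans (contra h) (not_not_imp φ)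

theorem imp_top : GLP (φ.imp .top) := weaken (imp_self .bot)

theorem and_left : GLP ((φ.and ψ).imp φ) := not_imp_of_not_imp (imp_imp_of_imp (bot_imp ψ.neg))

theorem and_right : GLP ((φ.and ψ).imp ψ) := not_imp_of_not_imp (k1 ψ.neg φ)

theorem imp_and (h₁ : GLP (χ.imp φ)) (h₂ : GLP (χ.imp ψ)) : GLP (χ.imp (φ.and ψ)) := by
  have h : GLP ((φ.imp ψ.neg).imp (χ.imp ψ.neg)) := imp_app imp_comp (weaken h₁)
  exact imp_not_of_imp_not (imp_app (imp_trans h (k2 χ ψ .bot)) (weaken h₂))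

theorem and_imp_and (h₁ : GLP (φ.imp χ)) (h₂ : GLP (ψ.imp θ)) :
    GLP ((φ.and ψ).imp (χ.and θ)) :=
  imp_and (imp_trans and_left h₁) (imp_trans and_right h₂)

theorem imp_imp_of_and_imp (h : GLP ((φ.and ψ).imp χ)) : GLP (ψ.imp (φ.imp χ)) := by
  have h' : GLP (φ.imp (χ.neg.imp ψ.neg)) := imp_swap (not_imp_of_not_imp h)
  exact imp_swap (imp_trans h' (k3 χ ψ))

theorem imp_or_left : GLP (φ.imp (φ.or ψ)) :=
  imp_trans (imp_not_not φ) (imp_imp_of_imp (bot_imp ψ))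

theorem imp_or_right : GLP (ψ.imp (φ.or ψ)) := k1 ψ φ.neg

theorem or_imp (h₁ : GLP (φ.imp χ)) (h₂ : GLP (ψ.imp χ)) : GLP ((φ.or ψ).imp χ) := by
  have clavius : GLP ((χ.neg.imp χ).imp χ) :=
    imp_trans ((k2 χ.neg χ .bot).mp' (imp_self χ.neg)) (not_not_imp χ)
  exact imp_trans (imp_trans (imp_imp_of_imp h₂) (imp_app imp_comp (weaken (contra h₁)))) clavius

theorem imp_foldr_or {l : List (Formula L)} (h : φ ∈ l) :
    GLP (φ.imp (l.foldr Formula.or .bot)) := by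
  induction l with
  | nil => cases h
  | cons ψ l ih =>
    rcases List.mem_cons.1 h with rfl | h
    · exact imp_or_left
    · exact imp_trans (ih h) imp_or_right

theorem foldr_or_imp {l : List (Formula L)} (h : ∀ φ ∈ l, GLP (φ.imp χ)) :
    GLP ((l.foldr Formula.or .bot).imp χ) := by
  induction l with
  | nil => exact bot_imp χ
  | cons ψ l ih =>
    rw [List.forall_mem_cons] at h
    exact or_imp h.1 (ih h.2)

variable {a b : L}

theorem box_mono (h : GLP (φ.imp ψ)) : GLP ((box a φ).imp (box a ψ)) :=
  (dist a φ ψ).mp' (nec a _ h)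

theorem dia_mono (h : GLP (φ.imp ψ)) : GLP ((dia a φ).imp (dia a ψ)) := contra (box_mono (contra h))

theorem dia_anti (hab : a ≤ b) : GLP ((dia b φ).imp (dia a φ)) := contra (mono a b φ.neg hab)

theorem dia_dia : GLP ((dia a (dia a φ)).imp (dia a φ)) :=
  contra (imp_trans (GLP.trans a a φ.neg le_rfl) (box_mono (imp_not_not _)))

theorem dia_dia_of_le (hab : a ≤ b) : GLP ((dia a (dia b φ)).imp (dia a φ)) :=
  imp_trans (dia_mono (dia_anti hab)) dia_dia

theorem dia_and_box : GLP (((dia a φ).and (box a ψ)).imp (dia a (φ.and ψ))) := by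
  have h₁ : GLP (ψ.imp ((φ.and ψ).neg.imp φ.neg)) :=
    imp_trans (imp_imp_of_and_imp (imp_self _)) imp_contra
  have h₂ : GLP ((box a ψ).imp ((dia a φ).imp (dia a (φ.and ψ)))) :=
    imp_trans (imp_trans (box_mono h₁) (dist a _ _)) imp_contra
  exact imp_app (imp_trans and_right h₂) and_left

theorem dia_and_dia_of_lt (hab : a < b) :
    GLP (((dia b φ).and (dia a ψ)).imp (dia b (φ.and (dia a ψ)))) :=
  imp_trans (imp_and and_left (imp_trans and_right (negintro a b ψ hab))) dia_and_box

end GLP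

section Worms

variable {L : Type} [LinearOrder L]

theorem worm_cons_imp_dia_top {μ a : L} (h : μ ≤ a) (w : List L) :
    GLP ((worm (a :: w)).imp (dia μ .top)) :=
  GLP.imp_trans (GLP.dia_mono GLP.imp_top) (GLP.dia_anti h)

theorem worm_append_cons_imp {μ : L} {P : List L} (R : List L) (hP : ∀ x ∈ P, μ < x) :
    GLP ((worm (P ++ μ :: R)).imp ((worm P).and (dia μ (worm R)))) := by
  induction P with
  | nil => exact GLP.imp_and GLP.imp_top (GLP.imp_self _)
  | cons p P ih =>
    rw [List.forall_mem_cons] at hP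
    have h : GLP ((dia p ((worm P).and (dia μ (worm R)))).imp (dia μ (worm R))) :=
      GLP.imp_trans (GLP.dia_mono GLP.and_right)
        (GLP.imp_trans (GLP.dia_anti hP.1.le) GLP.dia_dia)
    exact GLP.imp_trans (GLP.dia_mono (ih hP.2)) (GLP.imp_and (GLP.dia_mono GLP.and_left) h)

theorem and_imp_worm_append_cons {μ : L} {P : List L} (R : List L) (hP : ∀ x ∈ P, μ < x) :
    GLP (((worm P).and (dia μ (worm R))).imp (worm (P ++ μ :: R))) := by
  induction P with
  | nil => exact GLP.and_right
  | cons p P ih =>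
    rw [List.forall_mem_cons] at hP
    exact GLP.imp_trans (GLP.dia_and_dia_of_lt hP.1) (GLP.dia_mono (ih hP.2))

theorem exists_mem_forall_le_of_ne_nil {l : List L} (hl : l ≠ []) : ∃ μ ∈ l, ∀ x ∈ l, μ ≤ x := by
  obtain ⟨μ, hμ⟩ := Option.ne_none_iff_exists'.1 (List.min?_eq_none_iff.not.2 hl)
  exact ⟨μ, List.min?_eq_some_iff.1 hμ⟩

structure IsWormSplit (μ : L) (A P R : List L) : Prop where
  lt_of_mem_head : ∀ x ∈ P, μ < x
  imp_head : GLP ((worm A).imp (worm P))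
  imp_dia_tail : GLP ((worm A).imp (dia μ (worm R)))
  and_imp : GLP (((worm P).and (dia μ (worm R))).imp (worm A))

theorem exists_isWormSplit {μ : L} {A : List L} (hA : A ≠ []) (hμ : ∀ x ∈ A, μ ≤ x) :
    ∃ P R, IsWormSplit μ A P R ∧ P.Sublist A ∧ R.Sublist A ∧ R.length < A.length ∧
      (μ ∈ A → P.length < A.length) := by
  by_cases hμA : μ ∈ A
  · obtain ⟨P, R, rfl, hμP⟩ := List.eq_append_cons_of_mem hμA
    have hP : ∀ x ∈ P, μ < x := fun x hx =>
      (hμ x (List.mem_append_left _ hx)).lt_of_ne (by rintro rfl; exact hμP hx)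
    have h := worm_append_cons_imp R hP
    refine ⟨P, R, ⟨hP, GLP.imp_trans h GLP.and_left, GLP.imp_trans h GLP.and_right,
      and_imp_worm_append_cons R hP⟩, List.sublist_append_left _ _,
      (List.sublist_cons_self μ R).trans (List.sublist_append_right P _), by simp; omega,
      fun _ => by simp⟩
  · obtain ⟨a, w, rfl⟩ := List.exists_cons_of_ne_nil hA
    have hP : ∀ x ∈ a :: w, μ < x := fun x hx =>
      (hμ x hx).lt_of_ne (by rintro rfl; exact hμA hx)
    exact ⟨a :: w, [], ⟨hP, GLP.imp_self _, worm_cons_imp_dia_top (hP a (by simp)).le w,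
      GLP.and_left⟩, List.Sublist.refl _, List.nil_sublist _, by simp, fun h => absurd h hμA⟩

theorem IsWormSplit.imp_of_imp_head {μ : L} {A B P Q R S : List L} (hA : IsWormSplit μ A P R)
    (hB : IsWormSplit μ B Q S) (hS : GLP ((worm A).imp (dia μ (worm S))))
    (hPQ : GLP ((worm P).imp (worm Q))) : GLP ((worm A).imp (worm B)) :=
  GLP.imp_trans (GLP.imp_and (GLP.imp_trans hA.imp_head hPQ) hS) hB.and_imp

theorem IsWormSplit.lt_of_lt_head {μ ν : L} {A B P Q R S : List L} (hA : IsWormSplit μ A P R)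
    (hB : IsWormSplit μ B Q S) (hS : GLP ((worm A).imp (dia μ (worm S)))) (hμν : μ < ν)
    (hQP : Lt ν Q P) : Lt μ B A :=
  GLP.imp_trans (GLP.imp_and (GLP.imp_trans hA.imp_head hQP) hS)
    (GLP.imp_trans (GLP.dia_and_dia_of_lt hμν)
      (GLP.imp_trans (GLP.dia_mono hB.and_imp) (GLP.dia_anti hμν.le)))

/-- Recording that `ν` is a letter of `A` or `B` bounds it below by every common lower bound of
their letters, which is what the induction needs. -/
def WormTrichotomy (A B : List L) : Prop :=
  (GLP ((worm A).imp (worm B)) ∧ GLP ((worm B).imp (worm A))) ∨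
    (∃ ν ∈ A ++ B, Lt ν A B) ∨ ∃ ν ∈ A ++ B, Lt ν B A

theorem WormTrichotomy.dia_imp_or_imp_dia {μ : L} {A B : List L} (h : WormTrichotomy A B)
    (hμ : ∀ x ∈ A ++ B, μ ≤ x) :
    GLP ((dia μ (worm A)).imp (dia μ (worm B))) ∨ GLP ((worm B).imp (dia μ (worm A))) := by
  rcases h with ⟨hAB, -⟩ | ⟨ν, hν, hBA⟩ | ⟨ν, hν, hAB⟩
  · exact .inl (GLP.dia_mono hAB)
  · exact .inr (GLP.imp_trans hBA (GLP.dia_anti (hμ ν hν)))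
  · exact .inl (GLP.imp_trans (GLP.dia_mono hAB) (GLP.dia_dia_of_le (hμ ν hν)))

theorem worm_trichotomy (A B : List L) : WormTrichotomy A B := by
  by_cases hA : A = []
  · subst hA
    rcases B with _ | ⟨b, w⟩
    · exact .inl ⟨GLP.imp_self _, GLP.imp_self _⟩
    · exact .inr (.inl ⟨b, by simp, worm_cons_imp_dia_top le_rfl w⟩)
  by_cases hB : B = []
  · subst hB
    obtain ⟨a, w, rfl⟩ := List.exists_cons_of_ne_nil hA
    exact .inr (.inr ⟨a, by simp, worm_cons_imp_dia_top le_rfl w⟩)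
  obtain ⟨μ, hμ, hμle⟩ := exists_mem_forall_le_of_ne_nil (List.append_ne_nil_of_left_ne_nil hA B)
  simp only [List.mem_append, or_imp, forall_and] at hμle
  obtain ⟨P, R, hAPR, hPA, hRA, hRlen, hPlen⟩ := exists_isWormSplit hA hμle.1
  obtain ⟨Q, S, hBQS, hQB, hSB, hSlen, hQlen⟩ := exists_isWormSplit hB hμle.2
  have hPQlen : P.length + Q.length < A.length + B.length := by
    have := hPA.length_le; have := hQB.length_le
    rcases List.mem_append.1 hμ with h | h
    · have := hPlen h; omega
    · have := hQlen h; omega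
  have hμRB : ∀ x ∈ R ++ B, μ ≤ x := by
    simpa [or_imp, forall_and] using ⟨fun x hx => hμle.1 x (hRA.subset hx), hμle.2⟩
  have hμSA : ∀ x ∈ S ++ A, μ ≤ x := by
    simpa [or_imp, forall_and] using ⟨fun x hx => hμle.2 x (hSB.subset hx), hμle.1⟩
  rcases (worm_trichotomy R B).dia_imp_or_imp_dia hμRB with hRB | hBR
  · exact .inr (.inr ⟨μ, hμ, GLP.imp_trans hAPR.imp_dia_tail hRB⟩)
  rcases (worm_trichotomy S A).dia_imp_or_imp_dia hμSA with hSA | hAS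
  · exact .inr (.inl ⟨μ, hμ, GLP.imp_trans hBQS.imp_dia_tail hSA⟩)
  have hμlt : ∀ ν ∈ P ++ Q, μ < ν := by
    simpa [or_imp, forall_and] using ⟨hAPR.lt_of_mem_head, hBQS.lt_of_mem_head⟩
  rcases worm_trichotomy P Q with ⟨hPQ, hQP⟩ | ⟨ν, hν, hQP⟩ | ⟨ν, hν, hPQ⟩
  · exact .inl ⟨hAPR.imp_of_imp_head hBQS hAS hPQ, hBQS.imp_of_imp_head hAPR hBR hQP⟩
  · exact .inr (.inl ⟨μ, hμ, hBQS.lt_of_lt_head hAPR hBR (hμlt ν hν) hQP⟩)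
  · exact .inr (.inr ⟨μ, hμ, hAPR.lt_of_lt_head hBQS hAS (hμlt ν hν) hPQ⟩)
termination_by A.length + B.length

theorem exists_worm_equiv_and (A B : List L) :
    ∃ C ⊆ A ++ B, GLP (((worm A).and (worm B)).imp (worm C)) ∧
      GLP ((worm C).imp ((worm A).and (worm B))) := by
  by_cases hA : A = []
  · subst hA
    exact ⟨B, by simp, GLP.and_right, GLP.imp_and GLP.imp_top (GLP.imp_self _)⟩
  by_cases hB : B = []
  · subst hB
    exact ⟨A, by simp, GLP.and_left, GLP.imp_and (GLP.imp_self _) GLP.imp_top⟩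
  obtain ⟨μ, hμ, hμle⟩ := exists_mem_forall_le_of_ne_nil (List.append_ne_nil_of_left_ne_nil hA B)
  simp only [List.mem_append, or_imp, forall_and] at hμle
  obtain ⟨P, R, hAPR, hPA, hRA, -, hPlen⟩ := exists_isWormSplit hA hμle.1
  obtain ⟨Q, S, hBQS, hQB, hSB, -, hQlen⟩ := exists_isWormSplit hB hμle.2
  have hPQlen : P.length + Q.length < A.length + B.length := by
    have := hPA.length_le; have := hQB.length_le
    rcases List.mem_append.1 hμ with h | h
    · have := hPlen h; omega
    · have := hQlen h; omega
  have hμRS : ∀ x ∈ R ++ S, μ ≤ x := by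
    simpa [or_imp, forall_and] using
      ⟨fun x hx => hμle.1 x (hRA.subset hx), fun x hx => hμle.2 x (hSB.subset hx)⟩
  obtain ⟨D, hD, hRSD, hDRS⟩ : ∃ D ⊆ A ++ B,
      GLP (((dia μ (worm R)).and (dia μ (worm S))).imp (dia μ (worm D))) ∧
        GLP ((dia μ (worm D)).imp ((dia μ (worm R)).and (dia μ (worm S)))) := by
    rcases (worm_trichotomy R S).dia_imp_or_imp_dia hμRS with h | h
    · exact ⟨R, (hRA.trans (List.sublist_append_left A B)).subset, GLP.and_left,
        GLP.imp_and (GLP.imp_self _) h⟩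
    · exact ⟨S, (hSB.trans (List.sublist_append_right A B)).subset, GLP.and_right,
        GLP.imp_and (GLP.imp_trans (GLP.dia_mono h) GLP.dia_dia) (GLP.imp_self _)⟩
  obtain ⟨E, hE, hPQE, hEPQ⟩ := exists_worm_equiv_and P Q
  have hμE : ∀ x ∈ E, μ < x := fun x hx => by
    rcases List.mem_append.1 (hE hx) with h | h
    · exact hAPR.lt_of_mem_head x h
    · exact hBQS.lt_of_mem_head x h
  refine ⟨E ++ μ :: D, ?_, ?_, ?_⟩
  · exact List.append_subset.2
      ⟨List.Subset.trans hE (hPA.append hQB).subset, List.cons_subset.2 ⟨hμ, hD⟩⟩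
  · exact GLP.imp_trans (GLP.imp_and
      (GLP.imp_trans (GLP.and_imp_and hAPR.imp_head hBQS.imp_head) hPQE)
      (GLP.imp_trans (GLP.and_imp_and hAPR.imp_dia_tail hBQS.imp_dia_tail) hRSD))
      (and_imp_worm_append_cons D hμE)
  · have hEμD := worm_append_cons_imp D hμE
    have hPQ := GLP.imp_trans (GLP.imp_trans hEμD GLP.and_left) hEPQ
    have hRS := GLP.imp_trans (GLP.imp_trans hEμD GLP.and_right) hDRS
    exact GLP.imp_and
      (GLP.imp_trans (GLP.imp_and (GLP.imp_trans hPQ GLP.and_left)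
        (GLP.imp_trans hRS GLP.and_left)) hAPR.and_imp)
      (GLP.imp_trans (GLP.imp_and (GLP.imp_trans hPQ GLP.and_right)
        (GLP.imp_trans hRS GLP.and_right)) hBQS.and_imp)
termination_by A.length + B.length

theorem worm_imp_or_and_imp_dia_bot [OrderBot L] {A : List L}
    (irrefl : ¬ GLP ((worm A).imp (dia ⊥ (worm A)))) (B : List L) :
    GLP ((worm A).imp (worm B)) ∨ GLP (((worm A).and (worm B)).imp (dia ⊥ (worm A))) := by
  obtain ⟨C, -, hABC, hCAB⟩ := exists_worm_equiv_and A B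
  rcases worm_trichotomy A C with ⟨hAC, -⟩ | ⟨ν, -, hCA⟩ | ⟨ν, -, hAC⟩
  · exact .inl (GLP.imp_trans hAC (GLP.imp_trans hCAB GLP.and_right))
  · exact .inr (GLP.imp_trans hABC (GLP.imp_trans hCA (GLP.dia_anti bot_le)))
  · refine absurd (GLP.imp_trans hAC ?_) irrefl
    exact GLP.imp_trans (GLP.dia_mono (GLP.imp_trans hCAB GLP.and_left)) (GLP.dia_anti bot_le)

end Worms

/-- Assuming irreflexivity of `<_0` (with `0 = ⊥` the least element of the
order), worms satisfy the disjunction property: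
`GLP ⊢ A → ⋁ᵢ A_i` iff `GLP ⊢ A → A_i` for some `i`. -/
theorem worm_disjunction_property {L : Type} [LinearOrder L] [OrderBot L]
    (irrefl : ∀ D : List L, ¬ GLP ((worm D).imp (Formula.dia (⊥ : L) (worm D))))
    (A : List L) (As : List (List L)) :
    GLP ((worm A).imp (disjWorms As)) ↔
      ∃ Ai ∈ As, GLP ((worm A).imp (worm Ai)) := by
  constructor
  · intro h
    by_contra! hAs
    have hdisj : GLP ((disjWorms As).imp ((worm A).imp (dia ⊥ (worm A)))) :=
      GLP.foldr_or_imp <| List.forall_mem_map.2 fun Ai hAi => GLP.imp_imp_of_and_imp <|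
        (worm_imp_or_and_imp_dia_bot (irrefl A) Ai).resolve_left (hAs Ai hAi)
    exact irrefl A (GLP.imp_contract (GLP.imp_trans h hdisj))
  · rintro ⟨Ai, hAi, h⟩
    exact GLP.imp_trans h (GLP.imp_foldr_or (List.mem_map_of_mem hAi))
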